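/- Let ζ : Σ → 2^{SP(Δ)} be an atomic substitution (extended to sp-pomsets and languages in the canonical way). Then for all languages L, L′ ⊆ Σ* (viewed as sets of totally ordered sp-pomsets): (1) ζ(L ∩ L′) = ζ(L) ∩ ζ(L′); (2) ζ(L \ L′) = ζ(L) \ ζ(L′); (3) ζ(L) = ∅ if and only if L = ∅. -/

import Mathlib

/-! An atomic substitution sends distinct words to disjoint languages, so its extension to word
languages commutes with intersection and difference; it sends every word to a non-empty language,
so it also reflects emptiness. Disjointness comes from left cancellation of sequential primes:
`P·W = P'·W'` with `P`, `P'` sequential primes forces `P = P'` and `W = W'`. To see this, split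
off the first sequential factor of an sp-term; this split respects the sp-pomset axioms, so it is
defined on pomsets, and a sequential prime is its own first factor. -/

namespace WBKA

/-- Series-parallel terms over an alphabet `A`. -/
inductive SPTerm (A : Type) : Type
  | one : SPTerm A
  | atom : A → SPTerm A
  | seq : SPTerm A → SPTerm A → SPTerm A
  | par : SPTerm A → SPTerm A → SPTerm A

/-- The congruence generated by the series-parallel pomset axioms:
associativity of both compositions, commutativity of parallel composition,
and the empty pomset acting as unit for both. -/
inductive SPEquiv {A : Type} : SPTerm A → SPTerm A → Prop
  | refl (u : SPTerm A) : SPEquiv u u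
  | symm {u v : SPTerm A} : SPEquiv u v → SPEquiv v u
  | trans {u v w : SPTerm A} : SPEquiv u v → SPEquiv v w → SPEquiv u w
  | seqCongr {u u' v v' : SPTerm A} :
      SPEquiv u u' → SPEquiv v v' → SPEquiv (u.seq v) (u'.seq v')
  | parCongr {u u' v v' : SPTerm A} :
      SPEquiv u u' → SPEquiv v v' → SPEquiv (u.par v) (u'.par v')
  | seqAssoc (u v w : SPTerm A) : SPEquiv ((u.seq v).seq w) (u.seq (v.seq w))
  | parAssoc (u v w : SPTerm A) : SPEquiv ((u.par v).par w) (u.par (v.par w))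
  | parComm (u v : SPTerm A) : SPEquiv (u.par v) (v.par u)
  | seqOneLeft (u : SPTerm A) : SPEquiv (SPTerm.one.seq u) u
  | seqOneRight (u : SPTerm A) : SPEquiv (u.seq SPTerm.one) u
  | parOne (u : SPTerm A) : SPEquiv (u.par SPTerm.one) u

instance spSetoid (A : Type) : Setoid (SPTerm A) :=
  ⟨SPEquiv, SPEquiv.refl, SPEquiv.symm, SPEquiv.trans⟩

/-- Series-parallel pomsets over `A`, as the free algebra on the sp-pomset axioms. -/
def Pomset (A : Type) : Type := Quotient (spSetoid A)

namespace Pomset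

variable {A : Type}

def mk (u : SPTerm A) : Pomset A := Quotient.mk (spSetoid A) u

/-- The empty pomset `1`. -/
def eps : Pomset A := mk SPTerm.one

/-- The primitive pomset consisting of a single event labelled `a`. -/
def atom (a : A) : Pomset A := mk (SPTerm.atom a)

/-- Sequential composition of pomsets. -/
def seq : Pomset A → Pomset A → Pomset A :=
  Quotient.lift₂ (fun u v => mk (u.seq v))
    (fun _ _ _ _ hu hv => Quotient.sound (SPEquiv.seqCongr hu hv))

/-- Parallel composition of pomsets. -/
def par : Pomset A → Pomset A → Pomset A :=
  Quotient.lift₂ (fun u v => mk (u.par v))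
    (fun _ _ _ _ hu hv => Quotient.sound (SPEquiv.parCongr hu hv))

/-- `U` is the empty pomset. -/
def IsEmptyP (U : Pomset A) : Prop := U = eps

/-- `U` is primitive: it consists of a single labelled event. -/
def Primitive (U : Pomset A) : Prop := ∃ a : A, U = atom a

/-- `U` is sequential: a sequential composition of two non-empty pomsets. -/
def Sequential (U : Pomset A) : Prop :=
  ∃ V W : Pomset A, V ≠ eps ∧ W ≠ eps ∧ U = seq V W

/-- `U` is parallel: a parallel composition of two non-empty pomsets. -/
def Parallel (U : Pomset A) : Prop :=
  ∃ V W : Pomset A, V ≠ eps ∧ W ≠ eps ∧ U = par V W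

/-- `U` is a sequential prime. -/
def SeqPrime (U : Pomset A) : Prop :=
  U ≠ eps ∧ ∀ V W : Pomset A, U = seq V W → V = eps ∨ W = eps

/-- `U` is a parallel prime. -/
def ParPrime (U : Pomset A) : Prop :=
  U ≠ eps ∧ ∀ V W : Pomset A, U = par V W → V = eps ∨ W = eps

/-- Sequential product of a list of pomsets. -/
def seqProd (l : List (Pomset A)) : Pomset A := l.foldr seq eps

/-- Parallel product of a list of pomsets. -/
def parProd (l : List (Pomset A)) : Pomset A := l.foldr par eps

end Pomset

/-- Pointwise sequential composition of pomset languages. -/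
def langSeq {A : Type} (L M : Set (Pomset A)) : Set (Pomset A) :=
  Set.image2 Pomset.seq L M

/-- Pointwise parallel composition of pomset languages. -/
def langPar {A : Type} (L M : Set (Pomset A)) : Set (Pomset A) :=
  Set.image2 Pomset.par L M

/-- `n`-fold sequential power of a language. -/
def langPow {A : Type} (L : Set (Pomset A)) : ℕ → Set (Pomset A)
  | 0 => {Pomset.eps}
  | n + 1 => langSeq L (langPow L n)

/-- Kleene closure of a pomset language. -/
def langStar {A : Type} (L : Set (Pomset A)) : Set (Pomset A) :=
  ⋃ n : ℕ, langPow L n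

/-- Series-rational expressions over `A`. -/
inductive SR (A : Type) : Type
  | zero : SR A
  | one : SR A
  | atom : A → SR A
  | plus : SR A → SR A → SR A
  | seq : SR A → SR A → SR A
  | par : SR A → SR A → SR A
  | star : SR A → SR A

/-- The sp-language semantics of series-rational expressions. -/
def sem {A : Type} : SR A → Set (Pomset A)
  | .zero => ∅
  | .one => {Pomset.eps}
  | .atom a => {Pomset.atom a}
  | .plus e f => sem e ∪ sem f
  | .seq e f => langSeq (sem e) (sem f)
  | .par e f => langPar (sem e) (sem f)
  | .star e => langStar (sem e)

/-- The syntactic predicate `F` characterising acceptance of the empty pomset. -/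
inductive EF {A : Type} : SR A → Prop
  | one : EF SR.one
  | plusLeft {e : SR A} (f : SR A) : EF e → EF (SR.plus e f)
  | plusRight (e : SR A) {f : SR A} : EF f → EF (SR.plus e f)
  | seq {e f : SR A} : EF e → EF f → EF (SR.seq e f)
  | par {e f : SR A} : EF e → EF f → EF (SR.par e f)
  | star (e : SR A) : EF (SR.star e)

/-- Pomset automata. -/
structure PA (A : Type) (Q : Type) where
  acc : Set Q
  δ : Q → A → Set Q
  γ : Q → Multiset Q → Set Q

/-- The run relation of a pomset automaton. -/
inductive Run {A Q : Type} (M : PA A Q) : Q → Pomset A → Q → Prop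
  | triv (q : Q) : Run M q Pomset.eps q
  | seqUnit {q : Q} {a : A} {q' : Q} :
      q' ∈ M.δ q a → Run M q (Pomset.atom a) q'
  | comp {q : Q} {U : Pomset A} {q'' : Q} {V : Pomset A} {q' : Q} :
      Run M q U q'' → Run M q'' V q' → Run M q (U.seq V) q'
  | parUnit {q q' : Q} (l : List (Q × Pomset A × Q)) :
      q' ∈ M.γ q (↑(l.map Prod.fst) : Multiset Q) →
      (∀ x ∈ l, x.2.2 ∈ M.acc) →
      (∀ x ∈ l, Run M x.1 x.2.1 x.2.2) →
      Run M q (Pomset.parProd (l.map fun x => x.2.1)) q'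

/-- Language of a state of a pomset automaton. -/
def PA.lang {A Q : Type} (M : PA A Q) (q : Q) : Set (Pomset A) :=
  {U | ∃ q' ∈ M.acc, Run M q U q'}

/-- The triple `q →^U q'` matches the trivial-run rule. -/
def TrivialRun {A Q : Type} (_M : PA A Q) (q : Q) (U : Pomset A) (q' : Q) : Prop :=
  U = Pomset.eps ∧ q = q'

/-- `q →^U q'` is a sequential unit run. -/
def SeqUnitRun {A Q : Type} (M : PA A Q) (q : Q) (U : Pomset A) (q' : Q) : Prop :=
  ∃ a : A, U = Pomset.atom a ∧ q' ∈ M.δ q a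

/-- `q →^U q'` is a parallel unit run. -/
def ParUnitRun {A Q : Type} (M : PA A Q) (q : Q) (U : Pomset A) (q' : Q) : Prop :=
  ∃ l : List (Q × Pomset A × Q),
    q' ∈ M.γ q (↑(l.map Prod.fst) : Multiset Q) ∧
    (∀ x ∈ l, x.2.2 ∈ M.acc ∧ Run M x.1 x.2.1 x.2.2) ∧
    U = Pomset.parProd (l.map fun x => x.2.1)

/-- `q →^U q'` is a unit run: a sequential or a parallel unit run. -/
def UnitRun {A Q : Type} (M : PA A Q) (q : Q) (U : Pomset A) (q' : Q) : Prop :=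
  SeqUnitRun M q U q' ∨ ParUnitRun M q U q'

/-- `q →^U q'` is a composite run: a sequential composition of two non-trivial runs. -/
def CompositeRun {A Q : Type} (M : PA A Q) (q : Q) (U : Pomset A) (q' : Q) : Prop :=
  ∃ (V W : Pomset A) (q'' : Q),
    U = V.seq W ∧ Run M q V q'' ∧ Run M q'' W q' ∧
    ¬ TrivialRun M q V q'' ∧ ¬ TrivialRun M q'' W q'

/-- The support preorder: `Supports M q' q` means `q' ⪯ q`. -/
inductive Supports {A Q : Type} (M : PA A Q) : Q → Q → Prop
  | refl (q : Q) : Supports M q q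
  | trans {q r p : Q} : Supports M q r → Supports M r p → Supports M q p
  | deltaStep {q : Q} {a : A} {q' : Q} : q' ∈ M.δ q a → Supports M q' q
  | gammaStep {q : Q} {φ : Multiset Q} {q' : Q} : q' ∈ M.γ q φ → Supports M q' q
  | forkStep {q : Q} {φ : Multiset Q} {r : Q} :
      r ∈ φ → (M.γ q φ).Nonempty → Supports M r q

/-- A pomset automaton is fork-acyclic when every fork target `r` of `q`
satisfies `r ≺ q`, i.e. `q ⋠ r`. -/
def ForkAcyclic {A Q : Type} (M : PA A Q) : Prop :=
  ∀ (q : Q) (φ : Multiset Q) (r : Q),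
    r ∈ φ → (M.γ q φ).Nonempty → ¬ Supports M q r

/-- A set of states is support-closed. -/
def SupportClosed {A Q : Type} (M : PA A Q) (S : Set Q) : Prop :=
  ∀ q ∈ S, ∀ q' : Q, Supports M q' q → q' ∈ S

/-- Restriction of a pomset automaton to a set of states. -/
def PA.restrict {A Q : Type} (M : PA A Q) (S : Set Q) : PA A {q : Q // q ∈ S} where
  acc := {q | q.val ∈ M.acc}
  δ := fun q a => {r | r.val ∈ M.δ q.val a}
  γ := fun q φ => {r | r.val ∈ M.γ q.val (φ.map Subtype.val)}

/-- `n`-forking automata. -/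
def NForking {A Q : Type} (M : PA A Q) (n : ℕ) : Prop :=
  ∀ (q : Q) (φ : Multiset Q), (M.γ q φ).Nonempty → n ≤ Multiset.card φ

/-- Parsimonious automata: no fork target accepts the empty pomset. -/
def Parsimonious {A Q : Type} (M : PA A Q) : Prop :=
  ∀ (p : Q) (φ : Multiset Q) (q : Q),
    q ∈ φ → (M.γ p φ).Nonempty → Pomset.eps ∉ M.lang q

/-- Flat-branching automata: forks from fork targets never reach accepting states. -/
def FlatBranching {A Q : Type} (M : PA A Q) : Prop :=
  ∀ (p : Q) (φ : Multiset Q) (q : Q),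
    q ∈ φ → (M.γ p φ).Nonempty → ∀ ψ : Multiset Q, M.γ q ψ ∩ M.acc = ∅

/-- Well-structured pomset automata. -/
def WellStructured {A Q : Type} (M : PA A Q) : Prop :=
  (∀ (q : Q) (φ : Multiset Q), (M.γ q φ).Nonempty → 2 ≤ Multiset.card φ) ∧
  ∀ (p : Q) (φ : Multiset Q) (q : Q), q ∈ φ → (M.γ p φ).Nonempty →
    q ∉ M.acc ∧ ∀ ψ : Multiset Q, M.γ q ψ ∩ M.acc = ∅

/-- The relation `⇝` characterising runs labelled by the empty pomset. -/
inductive Leadsto {A Q : Type} (M : PA A Q) : Q → Q → Prop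
  | refl (p : Q) : Leadsto M p p
  | trans {p r q : Q} : Leadsto M p r → Leadsto M r q → Leadsto M p q
  | fork {p q : Q} (l : List (Q × Q)) :
      q ∈ M.γ p (↑(l.map Prod.fst) : Multiset Q) →
      (∀ x ∈ l, x.2 ∈ M.acc) →
      (∀ x ∈ l, Leadsto M x.1 x.2) →
      Leadsto M p q

/-- Concatenate each expression of a set with `f` on the right. -/
def seqAfter {A : Type} (T : Set (SR A)) (f : SR A) : Set (SR A) :=
  (fun g => SR.seq g f) '' T

/-- Antimirov-style sequential derivatives of sr-expressions. -/
def deltaS {A : Type} : SR A → A → Set (SR A)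
  | .zero, _ => ∅
  | .one, _ => ∅
  | .atom b, a => {g | g = SR.one ∧ a = b}
  | .plus e f, a => deltaS e a ∪ deltaS f a
  | .seq e f, a => seqAfter (deltaS e a) f ∪ {g | g ∈ deltaS f a ∧ EF e}
  | .par _ _, _ => ∅
  | .star e, a => seqAfter (deltaS e a) (SR.star e)

/-- Antimirov-style parallel derivatives of sr-expressions. -/
def gammaS {A : Type} : SR A → Multiset (SR A) → Set (SR A)
  | .zero, _ => ∅
  | .one, _ => ∅
  | .atom _, _ => ∅
  | .plus e f, φ => gammaS e φ ∪ gammaS f φ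
  | .seq e f, φ => seqAfter (gammaS e φ) f ∪ {g | g ∈ gammaS f φ ∧ EF e}
  | .par e f, φ => {g | g = SR.one ∧ φ = {e, f}}
  | .star e, φ => seqAfter (gammaS e φ) (SR.star e)

/-- The syntactic pomset automaton on sr-expressions. -/
def synPA (A : Type) : PA A (SR A) where
  acc := {e | EF e}
  δ := deltaS
  γ := gammaS

/-- The parallel-nesting depth of an sr-expression. -/
def pdepth {A : Type} : SR A → ℕ
  | .zero => 0
  | .one => 0
  | .atom _ => 0
  | .plus e f => max (pdepth e) (pdepth f)
  | .seq e f => max (pdepth e) (pdepth f)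
  | .par e f => max (pdepth e) (pdepth f) + 1
  | .star e => pdepth e

/-- A substitution `ζ : Σ → 2^{SP(Δ)}` is atomic. -/
def Atomic {A B : Type} (ζ : A → Set (Pomset B)) : Prop :=
  (∀ a : A, ∀ U ∈ ζ a, Pomset.SeqPrime U) ∧
  (∀ a b : A, (ζ a ∩ ζ b).Nonempty ↔ a = b)

/-- Extension of a substitution to words. -/
def substWord {A B : Type} (ζ : A → Set (Pomset B)) : List A → Set (Pomset B)
  | [] => {Pomset.eps}
  | a :: w => langSeq (ζ a) (substWord ζ w)

/-- Extension of a substitution to word languages. -/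
def substLang {A B : Type} (ζ : A → Set (Pomset B)) (L : Set (List A)) :
    Set (Pomset B) :=
  ⋃ w ∈ L, substWord ζ w

/-- `L_A(α)` for a set `α` of states: the atom language of `α`. -/
def atomLang {Q U : Type} (LA : Q → Set U) (α : Set Q) : Set U :=
  (⋂ q ∈ α, LA q) \ (⋃ (q : Q) (_ : q ∉ α), LA q)

namespace Pomset

variable {A : Type}

theorem mk_eq_mk {u v : SPTerm A} (h : SPEquiv u v) : mk u = mk v := Quotient.sound h

theorem mk_one : mk (SPTerm.one : SPTerm A) = eps := rfl

theorem mk_seq (u v : SPTerm A) : mk (u.seq v) = (mk u).seq (mk v) := rfl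

theorem mk_par (u v : SPTerm A) : mk (u.par v) = (mk u).par (mk v) := rfl

theorem seq_assoc (U V W : Pomset A) : (U.seq V).seq W = U.seq (V.seq W) := by
  induction U using Quotient.ind
  induction V using Quotient.ind
  induction W using Quotient.ind
  exact Quotient.sound (SPEquiv.seqAssoc _ _ _)

theorem eps_seq (U : Pomset A) : eps.seq U = U := by
  induction U using Quotient.ind
  exact Quotient.sound (SPEquiv.seqOneLeft _)

theorem seq_eps (U : Pomset A) : U.seq eps = U := by
  induction U using Quotient.ind
  exact Quotient.sound (SPEquiv.seqOneRight _)

theorem par_assoc (U V W : Pomset A) : (U.par V).par W = U.par (V.par W) := by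
  induction U using Quotient.ind
  induction V using Quotient.ind
  induction W using Quotient.ind
  exact Quotient.sound (SPEquiv.parAssoc _ _ _)

theorem par_comm (U V : Pomset A) : U.par V = V.par U := by
  induction U using Quotient.ind
  induction V using Quotient.ind
  exact Quotient.sound (SPEquiv.parComm _ _)

theorem par_eps (U : Pomset A) : U.par eps = U := by
  induction U using Quotient.ind
  exact Quotient.sound (SPEquiv.parOne _)

theorem eps_par (U : Pomset A) : eps.par U = U := by
  rw [par_comm, par_eps]

end Pomset

namespace SPTerm

variable {A : Type}

/-- Splits off the first sequential factor (an atom, or a parallel composition of two non-empty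
terms) together with the rest; `none` means the term denotes the empty pomset. -/
def splitHead : SPTerm A → Option (Pomset A × Pomset A)
  | one => none
  | atom a => some (Pomset.atom a, Pomset.eps)
  | seq u v =>
    match splitHead u with
    | none => splitHead v
    | some (p, r) => some (p, r.seq (Pomset.mk v))
  | par u v =>
    match splitHead u, splitHead v with
    | none, _ => splitHead v
    | some _, none => splitHead u
    | some _, some _ => some (Pomset.mk (u.par v), Pomset.eps)

theorem mk_eq_eps_of_splitHead_eq_none {u : SPTerm A} (h : u.splitHead = none) :
    Pomset.mk u = Pomset.eps := by
  induction u with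
  | one => rfl
  | atom a => simp [splitHead] at h
  | seq u v ihu ihv =>
    cases hu : u.splitHead with
    | none => simp only [splitHead, hu] at h; rw [Pomset.mk_seq, ihu hu, ihv h, Pomset.seq_eps]
    | some => simp [splitHead, hu] at h
  | par u v ihu ihv =>
    cases hu : u.splitHead with
    | none => simp only [splitHead, hu] at h; rw [Pomset.mk_par, ihu hu, ihv h, Pomset.par_eps]
    | some => cases hv : v.splitHead <;> simp [splitHead, hu, hv] at h

theorem splitHead_eq_of_equiv {u v : SPTerm A} (h : SPEquiv u v) :
    u.splitHead = v.splitHead := by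
  induction h with
  | refl => rfl
  | symm _ ih => exact ih.symm
  | trans _ _ ih₁ ih₂ => exact ih₁.trans ih₂
  | seqCongr _ hv ih₁ ih₂ => simp only [splitHead, ih₁, ih₂, Pomset.mk_eq_mk hv]
  | parCongr hu hv ih₁ ih₂ =>
    simp only [splitHead, ih₁, ih₂, Pomset.mk_eq_mk (hu.parCongr hv)]
  | seqAssoc u v w =>
    cases hu : u.splitHead <;> cases hv : v.splitHead <;>
      simp [splitHead, hu, hv, Pomset.mk_seq, Pomset.seq_assoc]
  | parAssoc u v w =>
    cases hu : u.splitHead <;> cases hv : v.splitHead <;> cases hw : w.splitHead <;>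
      simp [splitHead, hu, hv, hw, Pomset.mk_par, Pomset.par_assoc, Pomset.par_eps,
        Pomset.eps_par, mk_eq_eps_of_splitHead_eq_none]
  | parComm u v =>
    cases hu : u.splitHead <;> cases hv : v.splitHead <;>
      simp [splitHead, hu, hv, Pomset.mk_par, Pomset.par_comm]
  | seqOneLeft u => rfl
  | seqOneRight u =>
    cases hu : u.splitHead <;> simp [splitHead, hu, Pomset.mk_one, Pomset.seq_eps]
  | parOne u => cases hu : u.splitHead <;> simp [splitHead, hu]

theorem mk_eq_eps_iff {u : SPTerm A} : Pomset.mk u = Pomset.eps ↔ u.splitHead = none :=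
  ⟨fun h => splitHead_eq_of_equiv (Quotient.exact h), mk_eq_eps_of_splitHead_eq_none⟩

theorem mk_eq_seq_of_splitHead_eq_some {u : SPTerm A} {p r : Pomset A}
    (h : u.splitHead = some (p, r)) : Pomset.mk u = p.seq r ∧ p ≠ Pomset.eps := by
  induction u generalizing p r with
  | one => simp [splitHead] at h
  | atom a =>
    simp only [splitHead, Option.some.injEq, Prod.mk.injEq] at h
    obtain ⟨rfl, rfl⟩ := h
    exact ⟨(Pomset.seq_eps _).symm, by simp [Pomset.atom, mk_eq_eps_iff, splitHead]⟩
  | seq u v ihu ihv =>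
    cases hu : u.splitHead with
    | none =>
      simp only [splitHead, hu] at h
      rw [Pomset.mk_seq, mk_eq_eps_of_splitHead_eq_none hu, Pomset.eps_seq]
      exact ihv h
    | some pr =>
      simp only [splitHead, hu, Option.some.injEq, Prod.mk.injEq] at h
      obtain ⟨rfl, rfl⟩ := h
      obtain ⟨hu', hp⟩ := ihu hu
      exact ⟨by rw [Pomset.mk_seq, hu', Pomset.seq_assoc], hp⟩
  | par u v ihu ihv =>
    cases hu : u.splitHead with
    | none =>
      simp only [splitHead, hu] at h
      rw [Pomset.mk_par, mk_eq_eps_of_splitHead_eq_none hu, Pomset.eps_par]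
      exact ihv h
    | some =>
      cases hv : v.splitHead with
      | none =>
        simp only [splitHead, hu, hv] at h
        rw [Pomset.mk_par, mk_eq_eps_of_splitHead_eq_none hv, Pomset.par_eps]
        exact ihu (hu.trans h)
      | some =>
        simp only [splitHead, hu, hv, Option.some.injEq, Prod.mk.injEq] at h
        obtain ⟨rfl, rfl⟩ := h
        exact ⟨(Pomset.seq_eps _).symm, by simp [mk_eq_eps_iff, splitHead, hu, hv]⟩

end SPTerm

namespace Pomset

variable {A : Type}

def splitHead : Pomset A → Option (Pomset A × Pomset A) :=
  Quotient.lift SPTerm.splitHead fun _ _ => SPTerm.splitHead_eq_of_equiv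

theorem splitHead_eq_none_iff {U : Pomset A} : U.splitHead = none ↔ U = eps := by
  induction U using Quotient.ind
  exact SPTerm.mk_eq_eps_iff.symm

theorem splitHead_seq_of_splitHead_eq_some {U V p r : Pomset A}
    (h : U.splitHead = some (p, r)) : (U.seq V).splitHead = some (p, r.seq V) := by
  induction U using Quotient.ind
  induction V using Quotient.ind
  change SPTerm.splitHead _ = _ at h ⊢
  simp only [SPTerm.splitHead, h]
  rfl

theorem eq_seq_of_splitHead_eq_some {U p r : Pomset A} (h : U.splitHead = some (p, r)) :
    U = p.seq r ∧ p ≠ eps := by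
  induction U using Quotient.ind
  exact SPTerm.mk_eq_seq_of_splitHead_eq_some h

namespace SeqPrime

variable {P P' : Pomset A}

theorem splitHead_eq (hP : P.SeqPrime) : P.splitHead = some (P, eps) := by
  obtain ⟨hne, hprime⟩ := hP
  cases h : P.splitHead with
  | none => exact absurd (splitHead_eq_none_iff.mp h) hne
  | some pr =>
    obtain ⟨p, r⟩ := pr
    obtain ⟨rfl, hp⟩ := eq_seq_of_splitHead_eq_some h
    obtain rfl : r = eps := (hprime p r rfl).resolve_left hp
    rw [seq_eps]

theorem splitHead_seq (hP : P.SeqPrime) (W : Pomset A) : (P.seq W).splitHead = some (P, W) := by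
  rw [splitHead_seq_of_splitHead_eq_some hP.splitHead_eq, eps_seq]

theorem seq_ne_eps (hP : P.SeqPrime) (W : Pomset A) : P.seq W ≠ eps := by
  rw [Ne, ← splitHead_eq_none_iff, hP.splitHead_seq]
  exact Option.some_ne_none _

theorem seq_eq_seq_iff (hP : P.SeqPrime) (hP' : P'.SeqPrime) {W W' : Pomset A} :
    P.seq W = P'.seq W' ↔ P = P' ∧ W = W' := by
  refine ⟨fun h => ?_, fun ⟨hPP', hWW'⟩ => hPP' ▸ hWW' ▸ rfl⟩
  have := congrArg splitHead h
  rwa [hP.splitHead_seq, hP'.splitHead_seq, Option.some.injEq, Prod.mk.injEq] at this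

end SeqPrime

end Pomset

section Substitution

variable {A B : Type} {ζ : A → Set (Pomset B)}

theorem Atomic.nonempty (hζ : Atomic ζ) (a : A) : (ζ a).Nonempty :=
  ((hζ.2 a a).mpr rfl).mono Set.inter_subset_left

theorem Atomic.substWord_nonempty (hζ : Atomic ζ) (w : List A) : (substWord ζ w).Nonempty := by
  induction w with
  | nil => exact Set.singleton_nonempty _
  | cons a w ih => exact (hζ.nonempty a).image2 ih

theorem Atomic.eq_of_mem_substWord (hζ : Atomic ζ) {w w' : List A} {U : Pomset B}
    (hw : U ∈ substWord ζ w) (hw' : U ∈ substWord ζ w') : w = w' := by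
  induction w generalizing w' U with
  | nil =>
    cases w' with
    | nil => rfl
    | cons b v' =>
      obtain ⟨V, hV, W, -, rfl⟩ := hw'
      exact absurd hw ((hζ.1 b V hV).seq_ne_eps W)
  | cons a v ih =>
    obtain ⟨V, hV, W, hW, rfl⟩ := hw
    cases w' with
    | nil => exact absurd hw' ((hζ.1 a V hV).seq_ne_eps W)
    | cons b v' =>
      obtain ⟨V', hV', W', hW', hVW⟩ := hw'
      obtain ⟨rfl, rfl⟩ := ((hζ.1 a V hV).seq_eq_seq_iff (hζ.1 b V' hV')).mp hVW.symm
      rw [(hζ.2 a b).mp ⟨V, hV, hV'⟩, ih hW hW']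

theorem Atomic.pairwise_disjoint_substWord (hζ : Atomic ζ) :
    Pairwise (Function.onFun Disjoint (substWord ζ)) := fun _ _ hne =>
  Set.disjoint_left.mpr fun _ hw hw' => hne (hζ.eq_of_mem_substWord hw hw')

end Substitution

/-- Atomic substitutions preserve intersection and difference of word
languages, and reflect emptiness. -/
theorem atomic_substitution_properties {A B : Type} (ζ : A → Set (Pomset B))
    (hζ : Atomic ζ) (L L' : Set (List A)) :
    substLang ζ (L ∩ L') = substLang ζ L ∩ substLang ζ L' ∧
    substLang ζ (L \ L') = substLang ζ L \ substLang ζ L' ∧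
    (substLang ζ L = ∅ ↔ L = ∅) := by
  have hdisj := hζ.pairwise_disjoint_substWord
  refine ⟨Set.biUnion_inter_of_pairwise_disjoint hdisj L L',
    (Set.biUnion_sdiff_biUnion_eq (hdisj.set_pairwise _)).symm, ?_⟩
  simp only [substLang, Set.iUnion_eq_empty, Set.eq_empty_iff_forall_notMem (s := L)]
  exact forall_congr' fun w => imp_iff_not (hζ.substWord_nonempty w).ne_empty

end WBKA
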